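/- arXiv:2002.03719 — 9 statements merged into one kernel-verified Lean document; each statement's English description precedes it below -/
import Mathlib

section
/- Let k be an algebraically closed field of characteristic p > 0 and let h_1, h_2 be integers with 1 < h_1, h_2 < p. Then there exist distinct elements P_1, P_2 of k such that 1/((x − P_1)^{h_1}(x − P_2)^{h_2}) is exact if and only if h_1 + h_2 ≥ p + 2; moreover, when h_1 + h_2 ≥ p + 2 this rational function is exact for every choice of distinct P_1, P_2 in k. -/
/-!
If `h₁ + h₂ ≥ p + 2`, write `A = X - P₁`, `B = X - P₂`: then
`1 / (A^h₁ B^h₂) = A^(p-h₁) B^(p-h₂) / (AB)^p`, whose numerator has degree `≤ p - 2` and hence a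
polynomial antiderivative `u`, while `(AB)^p` has derivative zero; so the function is
`(u / (AB)^p)'`.

Conversely, translate `P₁` to `0` and expand in `k⟦X⟧`, writing a putative antiderivative as
`X^(-m) F` with `F` a power series. Then `X^(m+1) (X^(-m) F)' = X F' - m F` has vanishing
coefficient of `X^m`, whereas in `X^(m+1) / (X^h₁ (X - c)^h₂)` that coefficient is the
coefficient of `X^(h₁-1)` in `(X - c)^(-h₂)`, a unit times `binom(h₁ + h₂ - 2, h₂ - 1)`, which is
nonzero in characteristic `p` when `h₁ + h₂ ≤ p + 1`. (This is the residue at `P₁`.)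
-/

open Polynomial

/-- `HasDerivRF f g` means `g` is the formal derivative of the rational function `f` in `k(x)`:
if `f = u / v` with `v ≠ 0`, then `g = (u' v - u v') / v ^ 2`. -/
def HasDerivRF {k : Type*} [Field k] (f g : RatFunc k) : Prop :=
  ∃ u v : Polynomial k, v ≠ 0 ∧
    f = algebraMap (Polynomial k) (RatFunc k) u / algebraMap (Polynomial k) (RatFunc k) v ∧
    g = algebraMap (Polynomial k) (RatFunc k)
          (Polynomial.derivative u * v - u * Polynomial.derivative v) /
        algebraMap (Polynomial k) (RatFunc k) (v ^ 2)

/-- A rational function is exact if it is the formal derivative of some rational function. -/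
def IsExactRF {k : Type*} [Field k] (g : RatFunc k) : Prop := ∃ f : RatFunc k, HasDerivRF f g

section CharP

variable {K : Type*} [Field K] (p : ℕ) [CharP K p]

theorem CharP.natCast_ne_zero_of_pos_of_lt {n : ℕ} (hn₀ : 0 < n) (hn : n < p) : (n : K) ≠ 0 := by
  rw [Ne, CharP.cast_eq_zero_iff K p]
  exact fun hdvd => (Nat.le_of_dvd hn₀ hdvd).not_gt hn

theorem CharP.cast_choose_ne_zero_of_lt {n j : ℕ} (hj : j ≤ n) (hn : n < p) :
    (n.choose j : K) ≠ 0 := by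
  have : NeZero p := ⟨by omega⟩
  have hp := (CharP.char_is_prime_of_pos K p).out
  rw [Ne, CharP.cast_eq_zero_iff K p]
  intro hdvd
  have hfact : p ∣ n.factorial :=
    hdvd.trans ⟨_, by rw [← mul_assoc, Nat.choose_mul_factorial_mul_factorial hj]⟩
  exact (hp.dvd_factorial.mp hfact).not_gt hn

end CharP

namespace Polynomial

theorem exists_derivative_eq_of_natDegree_lt {K : Type*} [Field K] (p : ℕ) [CharP K p]
    (N : K[X]) (hN : N.natDegree + 1 < p) : ∃ u : K[X], derivative u = N := by
  refine ⟨∑ n ∈ N.support, C (N.coeff n / (n + 1 : K)) * X ^ (n + 1), ?_⟩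
  conv_rhs => rw [N.as_sum_support_C_mul_X_pow]
  rw [map_sum]
  refine Finset.sum_congr rfl fun n hn => ?_
  have hn₁ : ((n + 1 : ℕ) : K) ≠ 0 :=
    CharP.natCast_ne_zero_of_pos_of_lt p n.succ_pos (by linarith [le_natDegree_of_mem_supp n hn])
  rw [derivative_C_mul_X_pow, Nat.add_sub_cancel, ← Nat.cast_succ, div_mul_cancel₀ _ hn₁]

theorem derivative_pow_char {R : Type*} [CommRing R] (p : ℕ) [CharP R p] (q : R[X]) :
    derivative (q ^ p) = 0 := by
  rw [derivative_pow, CharP.cast_eq_zero, map_zero, zero_mul, zero_mul]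

theorem derivative_taylor {R : Type*} [CommRing R] (r : R) (f : R[X]) :
    derivative (taylor r f) = taylor r (derivative f) := by
  simp [taylor_apply, derivative_comp]

end Polynomial

namespace PowerSeries

variable {R : Type*} [CommRing R]

theorem X_mul_derivative_X_pow_mul (m : ℕ) (W : R⟦X⟧) :
    X * d⁄dX R (X ^ m * W) = X ^ m * (X * d⁄dX R W + C (m : R) * W) := by
  rcases m with _ | m
  · simp
  · rw [Derivation.leibniz, Derivation.leibniz_pow, Nat.add_sub_cancel, derivative_X]
    simp only [smul_eq_mul, nsmul_eq_mul, map_natCast]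
    ring

theorem coeff_X_mul_derivative_sub_C_mul (F : R⟦X⟧) (m : ℕ) :
    coeff m (X * d⁄dX R F - C (m : R) * F) = 0 := by
  rcases m with _ | m
  · simp
  · rw [map_sub, coeff_succ_X_mul, coeff_derivative, coeff_C_mul]
    push_cast
    ring

theorem inv_X_sub_C_pow {K : Type*} [Field K] {c : K} (hc : c ≠ 0) (h : ℕ) :
    ((X - C c) ^ h)⁻¹ = C ((-c)⁻¹ ^ h) * rescale c⁻¹ (invOneSubPow K h : K⟦X⟧) := by
  have hfac : (X - C c : K⟦X⟧) = C (-c) * rescale c⁻¹ (1 - X) := by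
    rw [map_sub, map_one, rescale_X, mul_sub, mul_one, ← mul_assoc, ← map_mul, neg_mul,
      mul_inv_cancel₀ hc, map_neg, map_neg, map_one]
    ring
  rw [inv_eq_iff_mul_eq_one (by simp [hc]), hfac, mul_pow, ← map_pow, ← map_pow,
    mul_mul_mul_comm, ← map_mul, ← map_mul, ← invOneSubPow_inv_eq_one_sub_pow, Units.val_inv,
    ← mul_pow, inv_mul_cancel₀ (neg_ne_zero.mpr hc), one_pow, map_one, map_one, one_mul]

theorem coeff_inv_X_sub_C_pow {K : Type*} [Field K] {c : K} (hc : c ≠ 0) {h : ℕ}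
    (hh : 0 < h) (j : ℕ) :
    coeff j ((X - C c) ^ h)⁻¹ = (-c)⁻¹ ^ h * (c⁻¹ ^ j * (h - 1 + j).choose (h - 1)) := by
  rw [inv_X_sub_C_pow hc, coeff_C_mul, coeff_rescale,
    invOneSubPow_val_eq_mk_sub_one_add_choose_of_pos K h hh, coeff_mk]

theorem sq_ne_wronskian_mul_X_pow_mul_X_sub_C_pow {K : Type*} [Field K] (p : ℕ) [CharP K p]
    {U V : K⟦X⟧} (hV : V ≠ 0) {c : K} (hc : c ≠ 0) {h₁ h₂ : ℕ} (hh₁ : 0 < h₁) (hh₂ : 0 < h₂)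
    (hs : h₁ + h₂ ≤ p + 1) :
    V ^ 2 ≠ (d⁄dX K U * V - U * d⁄dX K V) * (X ^ h₁ * (X - C c) ^ h₂) := by
  intro hE
  set m := V.order.toNat
  set W := divXPowOrder V
  have hVW : V = X ^ m * W := X_pow_order_mul_divXPowOrder.symm
  have hW : constantCoeff W ≠ 0 := constantCoeff_divXPowOrder_eq_zero_iff.not.mpr hV
  have hW0 : W ≠ 0 := fun h => hW (by rw [h, map_zero])
  set F := U * W⁻¹
  have hUF : U = F * W := by rw [mul_assoc, PowerSeries.inv_mul_cancel _ hW, mul_one]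
  -- `U / V = X^(-m) F`
  have hnum :
      X * (d⁄dX K U * V - U * d⁄dX K V) = X ^ m * W ^ 2 * (X * d⁄dX K F - C (m : K) * F) := by
    rw [hVW, hUF, Derivation.leibniz, smul_eq_mul, smul_eq_mul]
    linear_combination (-(F * W)) * X_mul_derivative_X_pow_mul m W
  have hcancel :
      X ^ (2 * m + 1) = X ^ (m + h₁) * (X * d⁄dX K F - C (m : K) * F) * (X - C c) ^ h₂ := by
    refine mul_right_cancel₀ (pow_ne_zero 2 hW0) ?_
    rw [hVW] at hE hnum
    linear_combination X * hE + X ^ h₁ * (X - C c) ^ h₂ * hnum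
  have key : X ^ (2 * m + 1) * ((X - C c) ^ h₂)⁻¹ =
      X ^ (m + h₁) * (X * d⁄dX K F - C (m : K) * F) := by
    rw [hcancel, mul_assoc, PowerSeries.mul_inv_cancel _ (by simp [hc]), mul_one]
  have hcoeff := congrArg (coeff (2 * m + h₁)) key
  rw [coeff_X_pow_mul', coeff_X_pow_mul', if_pos (by omega), if_pos (by omega),
    show 2 * m + h₁ - (2 * m + 1) = h₁ - 1 by omega, show 2 * m + h₁ - (m + h₁) = m by omega,
    coeff_X_mul_derivative_sub_C_mul, coeff_inv_X_sub_C_pow hc hh₂] at hcoeff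
  have hchoose : ((h₂ - 1 + (h₁ - 1)).choose (h₂ - 1) : K) ≠ 0 :=
    CharP.cast_choose_ne_zero_of_lt p (Nat.le_add_right _ _) (by omega)
  simp [hc, hchoose] at hcoeff

end PowerSeries

section RatFunc

variable {K : Type*} [Field K]

theorem RatFunc.X_sub_C_pow_mul_X_sub_C_pow_eq_algebraMap (h₁ h₂ : ℕ) (P₁ P₂ : K) :
    (RatFunc.X - RatFunc.C P₁) ^ h₁ * (RatFunc.X - RatFunc.C P₂) ^ h₂ =
      algebraMap K[X] (RatFunc K)
        ((Polynomial.X - Polynomial.C P₁) ^ h₁ * (Polynomial.X - Polynomial.C P₂) ^ h₂) := by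
  simp [RatFunc.algebraMap_X, RatFunc.algebraMap_C]

theorem hasDerivRF_div_of_derivative_eq_zero {u v : K[X]} (hv : v ≠ 0)
    (hv' : derivative v = 0) :
    HasDerivRF (algebraMap K[X] (RatFunc K) u / algebraMap K[X] (RatFunc K) v)
      (algebraMap K[X] (RatFunc K) (derivative u) / algebraMap K[X] (RatFunc K) v) := by
  refine ⟨u, v, hv, rfl, ?_⟩
  rw [hv', mul_zero, sub_zero, pow_two, map_mul, map_mul,
    mul_div_mul_right _ _ (by simpa using hv)]

theorem IsExactRF.exists_sq_eq_mul {M : K[X]} (hM : M ≠ 0)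
    (h : IsExactRF (algebraMap K[X] (RatFunc K) M)⁻¹) :
    ∃ u v : K[X], v ≠ 0 ∧ v ^ 2 = (derivative u * v - u * derivative v) * M := by
  obtain ⟨-, u, v, hv, -, hg⟩ := h
  refine ⟨u, v, hv, RatFunc.algebraMap_injective K ?_⟩
  rw [eq_div_iff (by simpa using pow_ne_zero 2 hv),
    inv_mul_eq_iff_eq_mul₀ (by simpa using hM)] at hg
  rw [hg, map_mul, mul_comm]

theorem isExactRF_inv_X_sub_C_pow_mul_X_sub_C_pow (p : ℕ) [CharP K p] {h₁ h₂ : ℕ}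
    (hh₁ : h₁ ≤ p) (hh₂ : h₂ ≤ p) (hs : p + 2 ≤ h₁ + h₂) (P₁ P₂ : K) :
    IsExactRF (((RatFunc.X - RatFunc.C P₁) ^ h₁ * (RatFunc.X - RatFunc.C P₂) ^ h₂)⁻¹) := by
  set N : K[X] := (X - C P₁) ^ (p - h₁) * (X - C P₂) ^ (p - h₂)
  have hN : N.natDegree + 1 < p := by
    simp only [N, natDegree_mul (pow_ne_zero _ (X_sub_C_ne_zero _))
      (pow_ne_zero _ (X_sub_C_ne_zero _)), natDegree_pow, natDegree_X_sub_C]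
    omega
  obtain ⟨u, hu⟩ := exists_derivative_eq_of_natDegree_lt p N hN
  have hpow : ((X - C P₁) * (X - C P₂)) ^ p = (X - C P₁) ^ h₁ * (X - C P₂) ^ h₂ * N := by
    rw [mul_mul_mul_comm, ← pow_add, ← pow_add, Nat.add_sub_cancel' hh₁, Nat.add_sub_cancel' hh₂,
      mul_pow]
  have hN0 : algebraMap K[X] (RatFunc K) N ≠ 0 :=
    (map_ne_zero_iff _ (RatFunc.algebraMap_injective K)).2
      (mul_ne_zero (pow_ne_zero _ (X_sub_C_ne_zero P₁)) (pow_ne_zero _ (X_sub_C_ne_zero P₂)))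
  have hfrac : (algebraMap K[X] (RatFunc K) ((X - C P₁) ^ h₁ * (X - C P₂) ^ h₂))⁻¹ =
      algebraMap K[X] (RatFunc K) (derivative u) /
        algebraMap K[X] (RatFunc K) (((X - C P₁) * (X - C P₂)) ^ p) := by
    rw [hpow, hu, map_mul (algebraMap K[X] (RatFunc K)) _ N, div_mul_cancel_right₀ hN0]
  rw [RatFunc.X_sub_C_pow_mul_X_sub_C_pow_eq_algebraMap, hfrac]
  exact ⟨_, hasDerivRF_div_of_derivative_eq_zero (by simp [X_sub_C_ne_zero])
    (derivative_pow_char p _)⟩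

theorem not_isExactRF_inv_X_sub_C_pow_mul_X_sub_C_pow (p : ℕ) [CharP K p] {h₁ h₂ : ℕ}
    (hh₁ : 0 < h₁) (hh₂ : 0 < h₂) (hs : h₁ + h₂ ≤ p + 1) {P₁ P₂ : K} (hP : P₁ ≠ P₂) :
    ¬ IsExactRF (((RatFunc.X - RatFunc.C P₁) ^ h₁ * (RatFunc.X - RatFunc.C P₂) ^ h₂)⁻¹) := by
  rw [RatFunc.X_sub_C_pow_mul_X_sub_C_pow_eq_algebraMap]
  intro hex
  obtain ⟨u, v, hv, huv⟩ := hex.exists_sq_eq_mul (by simp [X_sub_C_ne_zero])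
  have htaylor := congrArg (fun q => (taylor P₁ q : PowerSeries K)) huv
  have h₁X : taylor P₁ (X - C P₁) = X := by simp
  have h₂X : taylor P₁ (X - C P₂) = X - C (P₂ - P₁) := by
    rw [map_sub, taylor_X, taylor_C, map_sub]
    ring
  simp only [taylor_mul, taylor_pow, map_sub, ← derivative_taylor, h₁X, h₂X] at htaylor
  refine PowerSeries.sq_ne_wronskian_mul_X_pow_mul_X_sub_C_pow p (U := taylor P₁ u)
    (V := taylor P₁ v) ?_ (sub_ne_zero.2 hP.symm) hh₁ hh₂ hs ?_
  · simpa [taylor_eq_zero] using hv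
  · simpa [PowerSeries.derivative_coe] using htaylor

end RatFunc

theorem stmt1_general {k : Type*} [Field k] (p : ℕ) [CharP k p]
    (h₁ h₂ : ℕ) (hh₁ : 1 < h₁ ∧ h₁ < p) (hh₂ : 1 < h₂ ∧ h₂ < p) :
    ((∃ P₁ P₂ : k, P₁ ≠ P₂ ∧
        IsExactRF (((RatFunc.X - RatFunc.C P₁) ^ h₁ * (RatFunc.X - RatFunc.C P₂) ^ h₂)⁻¹)) ↔
      p + 2 ≤ h₁ + h₂) ∧
    (p + 2 ≤ h₁ + h₂ → ∀ P₁ P₂ : k, P₁ ≠ P₂ →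
      IsExactRF (((RatFunc.X - RatFunc.C P₁) ^ h₁ * (RatFunc.X - RatFunc.C P₂) ^ h₂)⁻¹)) := by
  have hexact (hs : p + 2 ≤ h₁ + h₂) (P₁ P₂ : k) :=
    isExactRF_inv_X_sub_C_pow_mul_X_sub_C_pow p hh₁.2.le hh₂.2.le hs P₁ P₂
  refine ⟨⟨fun ⟨P₁, P₂, hP, hex⟩ => ?_, fun hs => ⟨0, 1, zero_ne_one, hexact hs 0 1⟩⟩,
    fun hs P₁ P₂ _ => hexact hs P₁ P₂⟩
  by_contra hs
  exact not_isExactRF_inv_X_sub_C_pow_mul_X_sub_C_pow p (by omega) (by omega) (by omega) hP hex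

/-- For `1 < h₁, h₂ < p` over an algebraically closed field of characteristic `p`:
`1/((x - P₁)^{h₁} (x - P₂)^{h₂})` is exact for some distinct `P₁, P₂` iff `h₁ + h₂ ≥ p + 2`;
moreover, when `h₁ + h₂ ≥ p + 2` it is exact for every choice of distinct `P₁, P₂`. -/
theorem stmt1 {k : Type*} [Field k] [IsAlgClosed k] (p : ℕ) [CharP k p] (hp : 0 < p)
    (h₁ h₂ : ℕ) (hh₁ : 1 < h₁ ∧ h₁ < p) (hh₂ : 1 < h₂ ∧ h₂ < p) :
    ((∃ P₁ P₂ : k, P₁ ≠ P₂ ∧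
        IsExactRF (((RatFunc.X - RatFunc.C P₁) ^ h₁ * (RatFunc.X - RatFunc.C P₂) ^ h₂)⁻¹)) ↔
      p + 2 ≤ h₁ + h₂) ∧
    (p + 2 ≤ h₁ + h₂ → ∀ P₁ P₂ : k, P₁ ≠ P₂ →
      IsExactRF (((RatFunc.X - RatFunc.C P₁) ^ h₁ * (RatFunc.X - RatFunc.C P₂) ^ h₂)⁻¹)) :=
  stmt1_general p h₁ h₂ hh₁ hh₂
end

section
/- Let k be a field of characteristic p > 0, let r ≥ 1, let q_1, …, q_r be pairwise distinct elements of k, and let h_1, …, h_r be positive integers such that h_1 ≢ 1 (mod p) and p divides h_i for every i ≥ 2. Then the rational function 1/∏_{i=1}^r (x − q_i)^{h_i} is exact; explicitly, it is the formal derivative of 1/((1 − h_1) · (x − q_1)^{h_1 − 1} · ∏_{i=2}^r (x − q_i)^{h_i}). -/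
open Polynomial

lemma deriv_prod_zero {k : Type*} [Field k] {ι : Type*} {s : Finset ι} {f : ι → Polynomial k}
    (h : ∀ i ∈ s, Polynomial.derivative (f i) = 0) :
    Polynomial.derivative (∏ i ∈ s, f i) = 0 := by
  classical
  induction s using Finset.cons_induction with
  | empty => simp
  | cons a s ha ih =>
    rw [Finset.prod_cons, Polynomial.derivative_mul, h a (Finset.mem_cons_self a s),
      ih fun i hi => h i (Finset.mem_cons_of_mem hi)]
    simp

/-- If `h 0 ≢ 1 (mod p)` and `p ∣ h i` for all `i ≠ 0`, then `1 / ∏ (x - qᵢ)^{hᵢ}` is exact,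
being the derivative of `1/((1 - h 0)·(x - q 0)^{h 0 - 1}·∏_{i ≠ 0} (x - qᵢ)^{hᵢ})`. -/
theorem stmt2 {k : Type*} [Field k] (p : ℕ) [CharP k p] (hp : 0 < p)
    (r : ℕ) (hr : 1 ≤ r) (q : Fin r → k) (hq : Function.Injective q)
    (h : Fin r → ℕ) (hpos : ∀ i, 0 < h i)
    (h0 : ¬ h ⟨0, hr⟩ ≡ 1 [MOD p]) (hdvd : ∀ i, i ≠ ⟨0, hr⟩ → p ∣ h i) :
    IsExactRF ((∏ i, (RatFunc.X - RatFunc.C (q i)) ^ h i)⁻¹) ∧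
    HasDerivRF
      ((RatFunc.C (1 - (h ⟨0, hr⟩ : k)) * (RatFunc.X - RatFunc.C (q ⟨0, hr⟩)) ^ (h ⟨0, hr⟩ - 1) *
          ∏ i ∈ Finset.univ.erase ⟨0, hr⟩, (RatFunc.X - RatFunc.C (q i)) ^ h i)⁻¹)
      ((∏ i, (RatFunc.X - RatFunc.C (q i)) ^ h i)⁻¹) := by
  classical
  set i0 : Fin r := ⟨0, hr⟩ with hi0
  have hne1 : h i0 ≠ 1 := fun e => h0 (by rw [e])
  have hpos0 := hpos i0
  obtain ⟨m, hm⟩ : ∃ m, h i0 = m + 2 := ⟨h i0 - 2, by omega⟩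
  set c : k := 1 - (h i0 : k) with hc
  have hc0 : c ≠ 0 := by
    intro e
    apply h0
    have e1 : ((h i0 - 1 : ℕ) : k) = 0 := by
      rw [Nat.cast_sub hpos0, Nat.cast_one]
      rw [hc] at e; linear_combination -e
    have : p ∣ h i0 - 1 := (CharP.cast_eq_zero_iff k p _).mp e1
    exact ((Nat.modEq_iff_dvd' hpos0).mpr this).symm
  set A : Polynomial k := X - C (q i0) with hA
  set P : Polynomial k := ∏ i ∈ Finset.univ.erase i0, (X - C (q i)) ^ h i with hPdef
  set v : Polynomial k := C c * A ^ (m + 1) * P with hvdef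
  set F : Polynomial k := ∏ i, (X - C (q i)) ^ h i with hFdef
  have hA0 : A ≠ 0 := X_sub_C_ne_zero (q i0)
  have hP0 : P ≠ 0 :=
    Finset.prod_ne_zero_iff.mpr fun i _ => pow_ne_zero _ (X_sub_C_ne_zero _)
  have hF0 : F ≠ 0 :=
    Finset.prod_ne_zero_iff.mpr fun i _ => pow_ne_zero _ (X_sub_C_ne_zero _)
  have hv0 : v ≠ 0 := by
    simp only [hvdef]
    exact mul_ne_zero (mul_ne_zero (by simpa using hc0) (pow_ne_zero _ hA0)) hP0
  have hP' : derivative P = 0 := by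
    rw [hPdef]
    apply deriv_prod_zero
    intro i hi
    have hz : ((h i : k)) = 0 :=
      (CharP.cast_eq_zero_iff k p _).mpr (hdvd i (Finset.ne_of_mem_erase hi))
    rw [derivative_pow]
    simp [hz]
  have hcast : ((m + 1 : ℕ) : k) = -c := by
    rw [hc, hm]; push_cast; ring
  have hdv : derivative v = -(C c * C c) * A ^ m * P := by
    rw [hvdef, derivative_mul, hP', mul_zero, add_zero, derivative_mul, derivative_C,
      zero_mul, zero_add, derivative_pow, hcast]
    have : derivative A = 1 := by rw [hA]; simp
    rw [this]
    simp only [Nat.add_sub_cancel, mul_one, map_neg]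
    ring
  have hF : F = A ^ (m + 2) * P := by
    rw [hFdef, hPdef, hA, ← hm]
    exact (Finset.mul_prod_erase Finset.univ _ (Finset.mem_univ i0)).symm
  have key : (derivative (1 : Polynomial k) * v - 1 * derivative v) * F = v ^ 2 := by
    rw [derivative_one, zero_mul, one_mul, hdv, hF, hvdef]
    ring
  set φ := algebraMap (Polynomial k) (RatFunc k) with hφ
  have hφv : φ v ≠ 0 := by
    simpa [hφ] using (RatFunc.algebraMap_ne_zero hv0)
  have hφv2 : φ (v ^ 2) ≠ 0 := by
    simpa [hφ] using (RatFunc.algebraMap_ne_zero (pow_ne_zero 2 hv0))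
  have hφF : φ F ≠ 0 := by
    simpa [hφ] using (RatFunc.algebraMap_ne_zero hF0)
  have hFmap : φ F = ∏ i, (RatFunc.X - RatFunc.C (q i)) ^ h i := by
    rw [hFdef, map_prod]
    simp [hφ]
  have hvmap : φ v = RatFunc.C c * (RatFunc.X - RatFunc.C (q i0)) ^ (m + 1) *
      ∏ i ∈ Finset.univ.erase i0, (RatFunc.X - RatFunc.C (q i)) ^ h i := by
    rw [hvdef, hPdef, hA, map_mul, map_mul, map_pow, map_prod]
    simp [hφ]
  suffices H : HasDerivRF
      ((RatFunc.C (1 - (h i0 : k)) * (RatFunc.X - RatFunc.C (q i0)) ^ (h i0 - 1) *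
          ∏ i ∈ Finset.univ.erase i0, (RatFunc.X - RatFunc.C (q i)) ^ h i)⁻¹)
      ((∏ i, (RatFunc.X - RatFunc.C (q i)) ^ h i)⁻¹) from ⟨⟨_, H⟩, H⟩
  refine ⟨1, v, hv0, ?_, ?_⟩
  · have he : h i0 - 1 = m + 1 := by omega
    rw [map_one, ← hc, he, ← hvmap, one_div]
  · rw [← hFmap, eq_div_iff hφv2, inv_mul_eq_div, div_eq_iff hφF, ← map_mul]
    exact congrArg φ key.symm
end

section
/- Let k be an algebraically closed field of characteristic p > 0 and let h_1, h_2 be positive integers whose residues r_1 = h_1 mod p and r_2 = h_2 mod p satisfy r_1 + r_2 ≥ p + 2. Then for every pair of distinct elements P_1, P_2 of k, the rational function 1/((x − P_1)^{h_1}(x − P_2)^{h_2}) is exact. -/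
open Polynomial

/-!
Exact functions form a `k`-subspace of `k(x)` that is stable under multiplication by `p`-th
powers, since these have zero derivative. Writing `hᵢ = p qᵢ + rᵢ` thus reduces the claim to
`1 / ((x - a) ^ r₁ (x - b) ^ r₂)`. The derivative of `-1 / ((x - a) ^ m (x - b) ^ n)` is
`m / ((x - a) ^ (m + 1) (x - b) ^ n) + n / ((x - a) ^ m (x - b) ^ (n + 1))`. Hence, by induction
on `m`, `1 / ((x - a) ^ (m + 1) (x - b) ^ n)` is exact whenever `m + 1 < p`, `n ≤ p` and
`m + 1 + n ≥ p + 2`: then `m` is a unit of `k`, and the second term either vanishes (`n = p`) or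
is exact by induction (`n < p`).
-/

section ExactForms

variable {k : Type*} [Field k]

local notation "ι" => algebraMap k[X] (RatFunc k)

theorem hasDerivRF_zero : HasDerivRF (0 : RatFunc k) 0 :=
  ⟨0, 1, one_ne_zero, by simp, by simp⟩

theorem HasDerivRF.add {f₁ f₂ g₁ g₂ : RatFunc k} (h₁ : HasDerivRF f₁ g₁)
    (h₂ : HasDerivRF f₂ g₂) : HasDerivRF (f₁ + f₂) (g₁ + g₂) := by
  obtain ⟨u₁, v₁, hv₁, rfl, rfl⟩ := h₁
  obtain ⟨u₂, v₂, hv₂, rfl, rfl⟩ := h₂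
  have hι₁ := RatFunc.algebraMap_ne_zero hv₁
  have hι₂ := RatFunc.algebraMap_ne_zero hv₂
  refine ⟨u₁ * v₂ + u₂ * v₁, v₁ * v₂, mul_ne_zero hv₁ hv₂, ?_, ?_⟩
  · simp only [map_add, map_mul]
    field_simp
  · simp only [derivative_mul, map_add, map_sub, map_mul, map_pow]
    field_simp
    ring

theorem HasDerivRF.div_mul {f g : RatFunc k} (h : HasDerivRF f g) {s t : k[X]}
    (hs : derivative s = 0) (ht : derivative t = 0) (ht₀ : t ≠ 0) :
    HasDerivRF (ι s / ι t * f) (ι s / ι t * g) := by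
  obtain ⟨u, v, hv, rfl, rfl⟩ := h
  have hιt := RatFunc.algebraMap_ne_zero ht₀
  have hιv := RatFunc.algebraMap_ne_zero hv
  refine ⟨s * u, t * v, mul_ne_zero ht₀ hv, ?_, ?_⟩
  · simp only [map_mul]
    field_simp
  · simp only [derivative_mul, hs, ht, map_sub, map_add, map_mul, map_pow, map_zero]
    field_simp
    ring

theorem HasDerivRF.smul {f g : RatFunc k} (h : HasDerivRF f g) (c : k) :
    HasDerivRF (c • f) (c • g) := by
  simpa [RatFunc.smul_eq_C_mul, RatFunc.algebraMap_C] using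
    h.div_mul (s := C c) (t := 1) derivative_C derivative_one one_ne_zero

theorem HasDerivRF.pow_char_mul (p : ℕ) [CharP k p] {f g : RatFunc k} (h : HasDerivRF f g)
    (q : RatFunc k) : HasDerivRF (q ^ p * f) (q ^ p * g) := by
  have hp : ∀ r : k[X], derivative (r ^ p) = 0 := fun r => by
    simp [derivative_pow, CharP.cast_eq_zero]
  simpa [map_pow, ← div_pow, RatFunc.num_div_denom] using
    h.div_mul (hp q.num) (hp q.denom) (pow_ne_zero p q.denom_ne_zero)

variable (k) in
def exactSubmodule : Submodule k (RatFunc k) where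
  carrier := {g | IsExactRF g}
  add_mem' := fun ⟨_, h₁⟩ ⟨_, h₂⟩ => ⟨_, h₁.add h₂⟩
  zero_mem' := ⟨0, hasDerivRF_zero⟩
  smul_mem' c _ := fun ⟨_, h⟩ => ⟨_, h.smul c⟩

theorem pow_char_mul_mem_exactSubmodule (p : ℕ) [CharP k p] (q : RatFunc k) {g : RatFunc k}
    (hg : g ∈ exactSubmodule k) : q ^ p * g ∈ exactSubmodule k :=
  let ⟨_, h⟩ := hg; ⟨_, h.pow_char_mul p q⟩

theorem X_sub_C_mul_derivative_X_sub_C_pow (a : k) (m : ℕ) :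
    (X - C a) * derivative ((X - C a) ^ m) = C (m : k) * (X - C a) ^ m := by
  cases m with
  | zero => simp
  | succ m => rw [derivative_X_sub_C_pow, Nat.add_sub_cancel, pow_succ]; ring

theorem RatFunc.X_sub_C_ne_zero (a : k) : RatFunc.X - RatFunc.C a ≠ 0 := by
  simpa [RatFunc.algebraMap_C] using algebraMap_ne_zero (Polynomial.X_sub_C_ne_zero a)

noncomputable def twoPole (a b : k) (m n : ℕ) : RatFunc k :=
  ((RatFunc.X - RatFunc.C a) ^ m * (RatFunc.X - RatFunc.C b) ^ n)⁻¹

theorem twoPole_mul_add (p : ℕ) (a b : k) (q₁ q₂ r₁ r₂ : ℕ) :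
    twoPole a b (p * q₁ + r₁) (p * q₂ + r₂) = twoPole a b q₁ q₂ ^ p * twoPole a b r₁ r₂ := by
  simp only [twoPole, pow_add, pow_mul', mul_inv]
  ring

theorem hasDerivRF_neg_twoPole (a b : k) (m n : ℕ) :
    HasDerivRF (-twoPole a b m n)
      ((m : k) • twoPole a b (m + 1) n + (n : k) • twoPole a b m (n + 1)) := by
  set v : k[X] := (X - C a) ^ m * (X - C b) ^ n
  have hv : v ≠ 0 :=
    mul_ne_zero (pow_ne_zero _ (X_sub_C_ne_zero a)) (pow_ne_zero _ (X_sub_C_ne_zero b))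
  -- the logarithmic derivative `v' / v = m / (x - a) + n / (x - b)`, with denominators cleared
  have hlog : (X - C a) * (X - C b) * derivative v
      = (C (m : k) * (X - C b) + C (n : k) * (X - C a)) * v := by
    simp only [v, derivative_mul]
    linear_combination (X - C b) * (X - C b) ^ n * X_sub_C_mul_derivative_X_sub_C_pow a m
      + (X - C a) * (X - C a) ^ m * X_sub_C_mul_derivative_X_sub_C_pow b n
  refine ⟨-1, v, hv, ?_, ?_⟩
  · simp [v, twoPole, div_eq_mul_inv, RatFunc.algebraMap_C]
  · have hXa := RatFunc.X_sub_C_ne_zero a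
    have hXb := RatFunc.X_sub_C_ne_zero b
    have hlog' := congrArg ι hlog
    simp only [v, twoPole, RatFunc.smul_eq_C_mul, derivative_one, neg_zero, map_zero, map_neg,
      map_one, map_mul, map_add, map_sub, map_pow, RatFunc.algebraMap_X, RatFunc.algebraMap_C]
      at hlog' ⊢
    field_simp
    linear_combination -(RatFunc.X - RatFunc.C a) ^ m * (RatFunc.X - RatFunc.C b) ^ n * hlog'

theorem twoPole_mem_exactSubmodule {p : ℕ} [CharP k p] (a b : k) :
    ∀ {m n : ℕ}, m < p → n ≤ p → p + 2 ≤ m + n → twoPole a b m n ∈ exactSubmodule k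
  | 0, _, _, _, _ => by omega
  | m + 1, n, hm, hn, hmn => by
    have hm₀ : (m : k) ≠ 0 := by
      rw [Ne, CharP.cast_eq_zero_iff k p]
      exact Nat.not_dvd_of_pos_of_lt (by omega) (by omega)
    have hnext : (n : k) • twoPole a b m (n + 1) ∈ exactSubmodule k := by
      rcases hn.lt_or_eq with hn | rfl
      · exact Submodule.smul_mem _ _ (twoPole_mem_exactSubmodule a b (by omega) hn (by omega))
      · simp [CharP.cast_eq_zero]
    have hrel := sub_mem (⟨_, hasDerivRF_neg_twoPole a b m n⟩ : _ ∈ exactSubmodule k) hnext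
    rwa [add_sub_cancel_right, Submodule.smul_mem_iff _ hm₀] at hrel

end ExactForms

theorem stmt3_general {k : Type*} [Field k] (p : ℕ) [CharP k p] (hp : 0 < p)
    (h₁ h₂ : ℕ) (hres : p + 2 ≤ h₁ % p + h₂ % p) :
    ∀ P₁ P₂ : k, P₁ ≠ P₂ →
      IsExactRF (((RatFunc.X - RatFunc.C P₁) ^ h₁ * (RatFunc.X - RatFunc.C P₂) ^ h₂)⁻¹) := by
  intro P₁ P₂ _
  have hrem : twoPole P₁ P₂ (h₁ % p) (h₂ % p) ∈ exactSubmodule k :=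
    twoPole_mem_exactSubmodule P₁ P₂ (Nat.mod_lt h₁ hp) (Nat.mod_lt h₂ hp).le hres
  have h := pow_char_mul_mem_exactSubmodule p (twoPole P₁ P₂ (h₁ / p) (h₂ / p)) hrem
  rwa [← twoPole_mul_add, Nat.div_add_mod, Nat.div_add_mod] at h

/-- If the residues mod `p` of `h₁, h₂` satisfy `r₁ + r₂ ≥ p + 2`, then for all distinct
`P₁, P₂` the rational function `1/((x - P₁)^{h₁} (x - P₂)^{h₂})` is exact. -/
theorem stmt3 {k : Type*} [Field k] [IsAlgClosed k] (p : ℕ) [CharP k p] (hp : 0 < p)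
    (h₁ h₂ : ℕ) (hpos₁ : 0 < h₁) (hpos₂ : 0 < h₂)
    (hres : p + 2 ≤ h₁ % p + h₂ % p) :
    ∀ P₁ P₂ : k, P₁ ≠ P₂ →
      IsExactRF (((RatFunc.X - RatFunc.C P₁) ^ h₁ * (RatFunc.X - RatFunc.C P₂) ^ h₂)⁻¹) :=
  stmt3_general p hp h₁ h₂ hres
end

section
/- Let p be an odd prime, let k be an algebraically closed field of characteristic p, and let h_1, h_2, h_3 be positive integers with h_i ≡ (p+1)/2 (mod p) for i = 1, 2, 3. Then there exist pairwise distinct elements a_1, a_2, a_3 of k such that the rational function 1/((x − a_1)^{h_1}(x − a_2)^{h_2}(x − a_3)^{h_3}) is exact. -/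
/-!
Write `p = 2m + 1`, take `a = 0, 1, λ` with `λ` a root of the Hasse polynomial
`H(t) = ∑ᵢ (m choose i)² tⁱ`, and let `B` be the denominator. The polynomial
`W = (x(x-1)(x-λ))^m` has degree `3m < 2p - 1` and `x^(p-1)`-coefficient `(-1)^m H(λ) = 0`,
so `W = q'` for some polynomial `q`. Since every `hᵢ + m` is divisible by `p`, `V = B W` is a
`p`-th power, hence `V' = 0` and `1/B = W/V = (q/V)'`. The three points are distinct because
`H(0) = 1` and `H(1) = (2m choose m)` is prime to `p`.
-/

open Polynomial

namespace Polynomial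

theorem exists_derivative_eq_of_coeff_eq_zero {k : Type*} [Field k] (W : k[X])
    (hW : ∀ i, ((i + 1 : ℕ) : k) = 0 → W.coeff i = 0) : ∃ q : k[X], derivative q = W := by
  refine ⟨∑ i ∈ Finset.range (W.natDegree + 1),
    C (((i + 1 : ℕ) : k)⁻¹ * W.coeff i) * X ^ (i + 1), ?_⟩
  conv_rhs => rw [W.as_sum_range' _ W.natDegree.lt_succ_self]
  rw [derivative_sum]
  refine Finset.sum_congr rfl fun i _ => ?_
  rw [derivative_C_mul_X_pow, ← C_mul_X_pow_eq_monomial, Nat.add_sub_cancel]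
  by_cases hi : ((i + 1 : ℕ) : k) = 0
  · simp [hW i hi]
  · rw [mul_comm _ (W.coeff i), mul_assoc, inv_mul_cancel₀ hi, mul_one]

theorem derivative_pow_eq_zero_of_dvd {R : Type*} [CommSemiring R] (p : ℕ) [CharP R p]
    {n : ℕ} (hn : p ∣ n) (f : R[X]) : derivative (f ^ n) = 0 := by
  rw [derivative_pow, (CharP.cast_eq_zero_iff R p n).mpr hn, C_0, zero_mul, zero_mul]

end Polynomial

section

variable {k : Type*} [Field k]

theorem isExactRF_inv_of_mul_derivative_eq {B q V : k[X]} (hV : V ≠ 0)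
    (hV' : derivative V = 0) (h : B * derivative q = V) :
    IsExactRF (algebraMap k[X] (RatFunc k) B)⁻¹ := by
  have hAV : algebraMap k[X] (RatFunc k) V ≠ 0 := RatFunc.algebraMap_ne_zero hV
  have hAB : algebraMap k[X] (RatFunc k) B ≠ 0 :=
    RatFunc.algebraMap_ne_zero (left_ne_zero_of_mul (h ▸ hV))
  refine ⟨_, q, V, hV, rfl, ?_⟩
  rw [hV', mul_zero, sub_zero, ← h, eq_div_iff (by simpa [h] using pow_ne_zero 2 hAV)]
  simp only [map_mul, map_pow]
  field_simp

-- For `p = 2m + 1` its roots are the `λ` for which `y² = x(x-1)(x-λ)` is supersingular.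
noncomputable def hassePoly (k : Type*) [Field k] (m : ℕ) : k[X] :=
  ∑ i ∈ Finset.range (m + 1), C ((m.choose i : k) ^ 2) * X ^ i

theorem hassePoly_eval (m : ℕ) (x : k) :
    (hassePoly k m).eval x = ∑ i ∈ Finset.range (m + 1), (m.choose i : k) ^ 2 * x ^ i := by
  simp [hassePoly, eval_finsetSum]

theorem hassePoly_eval_zero (m : ℕ) : (hassePoly k m).eval 0 = 1 := by
  simp [hassePoly_eval, Finset.sum_range_succ']

theorem hassePoly_eval_one (m : ℕ) : (hassePoly k m).eval 1 = ((2 * m).choose m : k) := by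
  simp [hassePoly_eval, ← Nat.sum_range_choose_sq]

theorem coeff_hassePoly_self (m : ℕ) : (hassePoly k m).coeff m = 1 := by
  simp only [hassePoly, finsetSum_coeff, coeff_C_mul_X_pow]
  simp

theorem degree_hassePoly (m : ℕ) : (hassePoly k m).degree = m := by
  refine degree_eq_of_le_of_coeff_ne_zero ?_ (by simp [coeff_hassePoly_self])
  exact (degree_sum_le _ _).trans <| Finset.sup_le fun i hi =>
    (degree_C_mul_X_pow_le _ _).trans (by exact_mod_cast Finset.mem_range_succ_iff.mp hi)

theorem coeff_legendreCubic_pow (m : ℕ) (l : k) :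
    ((X * (X - C 1) * (X - C l)) ^ m).coeff (2 * m) = (-1) ^ m * (hassePoly k m).eval l := by
  rw [mul_assoc, mul_pow, mul_pow, two_mul, coeff_X_pow_mul, coeff_mul,
    Finset.Nat.sum_antidiagonal_eq_sum_range_succ_mk, hassePoly_eval, Finset.mul_sum]
  refine Finset.sum_congr rfl fun i hi => ?_
  have him : i ≤ m := Finset.mem_range_succ_iff.mp hi
  simp only [sub_eq_add_neg, ← C_neg, coeff_X_add_C_pow, Nat.choose_symm him,
    Nat.sub_sub_self him, neg_pow l]
  have : (-1 : k) ^ m = (-1) ^ (m - i) * (-1) ^ i := by rw [← pow_add, Nat.sub_add_cancel him]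
  rw [this]
  ring

theorem exists_hassePoly_root [IsAlgClosed k] {p m : ℕ} [CharP k p] (hp : p.Prime)
    (hpm : p = 2 * m + 1) : ∃ l : k, (hassePoly k m).eval l = 0 ∧ l ≠ 0 ∧ l ≠ 1 := by
  have hm : m ≠ 0 := by rintro rfl; exact Nat.not_prime_one (by simpa [hpm] using hp)
  obtain ⟨l, hl⟩ := IsAlgClosed.exists_root (hassePoly k m) (by simpa [degree_hassePoly])
  refine ⟨l, hl, ?_, ?_⟩ <;> rintro rfl
  · simp [hassePoly_eval_zero] at hl
  · rw [IsRoot, hassePoly_eval_one, CharP.cast_eq_zero_iff k p] at hl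
    exact hp.one_lt.ne' ((hp.coprime_choose_of_lt (by omega) (by omega)).eq_one_of_dvd hl)

theorem exists_derivative_eq_legendreCubic_pow {p m : ℕ} [CharP k p] (hpm : p = 2 * m + 1)
    {l : k} (hl : (hassePoly k m).eval l = 0) :
    ∃ q : k[X], derivative q = (X * (X - C 1) * (X - C l)) ^ m := by
  refine exists_derivative_eq_of_coeff_eq_zero _ fun i hi => ?_
  obtain ⟨c, hc⟩ := (CharP.cast_eq_zero_iff k p _).mp hi
  obtain rfl | hc2 : c = 1 ∨ 2 ≤ c := by rcases c with _ | _ | c <;> omega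
  · rw [show i = 2 * m by omega, coeff_legendreCubic_pow, hl, mul_zero]
  · refine coeff_eq_zero_of_natDegree_lt (natDegree_pow_le.trans_lt ?_)
    have : (X * (X - C 1) * (X - C l)).natDegree ≤ 3 := by compute_degree
    nlinarith

end

theorem Nat.dvd_add_of_modEq_succ_div_two {p m h : ℕ} (hpm : p = 2 * m + 1)
    (hh : h ≡ (p + 1) / 2 [MOD p]) : p ∣ h + m := by
  rw [← Nat.modEq_zero_iff_dvd]
  refine (hh.add_right m).trans ?_
  rw [show (p + 1) / 2 + m = p by omega, Nat.modEq_zero_iff_dvd]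

theorem stmt4_general {k : Type*} [Field k] [IsAlgClosed k] (p : ℕ) (hp : p.Prime) (hodd : Odd p)
    [CharP k p] (h₁ h₂ h₃ : ℕ)
    (hc₁ : h₁ ≡ (p + 1) / 2 [MOD p]) (hc₂ : h₂ ≡ (p + 1) / 2 [MOD p])
    (hc₃ : h₃ ≡ (p + 1) / 2 [MOD p]) :
    ∃ a₁ a₂ a₃ : k, a₁ ≠ a₂ ∧ a₁ ≠ a₃ ∧ a₂ ≠ a₃ ∧
      IsExactRF (((RatFunc.X - RatFunc.C a₁) ^ h₁ * (RatFunc.X - RatFunc.C a₂) ^ h₂ *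
        (RatFunc.X - RatFunc.C a₃) ^ h₃)⁻¹) := by
  obtain ⟨m, hpm⟩ := hodd
  obtain ⟨l, hl, hl0, hl1⟩ := exists_hassePoly_root (k := k) hp hpm
  obtain ⟨q, hq⟩ := exists_derivative_eq_legendreCubic_pow hpm hl
  refine ⟨0, 1, l, zero_ne_one, hl0.symm, hl1.symm, ?_⟩
  simp only [← RatFunc.algebraMap_X, ← RatFunc.algebraMap_C, ← map_sub, ← map_pow,
    ← map_mul]
  refine isExactRF_inv_of_mul_derivative_eq (q := q)
    (V := (X - C 0) ^ (h₁ + m) * (X - C 1) ^ (h₂ + m) * (X - C l) ^ (h₃ + m)) ?_ ?_ ?_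
  · exact mul_ne_zero (mul_ne_zero (pow_ne_zero _ (X_sub_C_ne_zero 0))
      (pow_ne_zero _ (X_sub_C_ne_zero 1))) (pow_ne_zero _ (X_sub_C_ne_zero l))
  · have hd : ∀ {h} (a : k), h ≡ (p + 1) / 2 [MOD p] →
        derivative ((X - C a) ^ (h + m)) = 0 :=
      fun a hh => derivative_pow_eq_zero_of_dvd p (Nat.dvd_add_of_modEq_succ_div_two hpm hh) _
    simp only [derivative_mul, hd 0 hc₁, hd 1 hc₂, hd l hc₃, mul_zero, zero_mul, add_zero]
  · rw [hq, C_0, sub_zero, mul_pow, mul_pow, pow_add, pow_add, pow_add]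
    ring

/-- For an odd prime `p` and `hᵢ ≡ (p+1)/2 (mod p)`, there exist pairwise distinct
`a₁, a₂, a₃` such that `1/((x-a₁)^{h₁}(x-a₂)^{h₂}(x-a₃)^{h₃})` is exact. -/
theorem stmt4 {k : Type*} [Field k] [IsAlgClosed k] (p : ℕ) (hp : p.Prime) (hodd : Odd p)
    [CharP k p] (h₁ h₂ h₃ : ℕ) (hpos₁ : 0 < h₁) (hpos₂ : 0 < h₂) (hpos₃ : 0 < h₃)
    (hc₁ : h₁ ≡ (p + 1) / 2 [MOD p]) (hc₂ : h₂ ≡ (p + 1) / 2 [MOD p])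
    (hc₃ : h₃ ≡ (p + 1) / 2 [MOD p]) :
    ∃ a₁ a₂ a₃ : k, a₁ ≠ a₂ ∧ a₁ ≠ a₃ ∧ a₂ ≠ a₃ ∧
      IsExactRF (((RatFunc.X - RatFunc.C a₁) ^ h₁ * (RatFunc.X - RatFunc.C a₂) ^ h₂ *
        (RatFunc.X - RatFunc.C a₃) ^ h₃)⁻¹) :=
  stmt4_general p hp hodd h₁ h₂ h₃ hc₁ hc₂ hc₃
end

section
/- Let p ≥ 3 be a prime, let k be a field of characteristic p, and let h_1, h_2 be integers with 2 ≤ h_1, h_2 ≤ p − 1 and h_1 + h_2 ≠ p + 2. Let c = (1 − h_2)/(h_1 − 1), computed in the prime field F_p ⊆ k. Then the three elements 0, 1, c of k are pairwise distinct and the rational function 1/(x^{p−1} · (x − 1)^{h_1} · (x − c)^{h_2}) is exact. -/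
open Polynomial

-- antiderivative lemma
lemma exists_antideriv {k : Type*} [Field k] (N : Polynomial k)
    (h : ∀ i : ℕ, ((i : k) + 1) = 0 → N.coeff i = 0) :
    ∃ F : Polynomial k, Polynomial.derivative F = N := by
  classical
  refine ⟨∑ i ∈ N.support, C (N.coeff i / ((i : k) + 1)) * X ^ (i + 1), ?_⟩
  rw [map_sum]
  have key : ∀ i ∈ N.support,
      derivative (C (N.coeff i / ((i : k) + 1)) * X ^ (i + 1)) = C (N.coeff i) * X ^ i := by
    intro i _
    rw [derivative_C_mul, derivative_X_pow, Nat.add_sub_cancel, ← mul_assoc, ← C_mul]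
    congr 1
    by_cases hi : ((i : k) + 1) = 0
    · rw [h i hi]
      push_cast
      rw [hi]
      ring
    · push_cast
      rw [div_mul_cancel₀ _ hi]
  rw [Finset.sum_congr rfl key]
  conv_rhs => rw [N.as_sum_support]
  simp [C_mul_X_pow_eq_monomial]

/-- For a prime `p ≥ 3`, `2 ≤ h₁, h₂ ≤ p - 1` with `h₁ + h₂ ≠ p + 2`, and
`c = (1 - h₂)/(h₁ - 1)` computed in `𝔽_p ⊆ k`, the elements `0, 1, c` are pairwise distinct
and `1/(x^{p-1} (x-1)^{h₁} (x-c)^{h₂})` is exact. -/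
theorem stmt5 {k : Type*} [Field k] (p : ℕ) [Fact p.Prime] (hp3 : 3 ≤ p) [CharP k p]
    (h₁ h₂ : ℕ) (hh₁ : 2 ≤ h₁ ∧ h₁ ≤ p - 1) (hh₂ : 2 ≤ h₂ ∧ h₂ ≤ p - 1)
    (hne : h₁ + h₂ ≠ p + 2)
    (c : k) (hc : c = ZMod.castHom (dvd_refl p) k
      (((1 : ZMod p) - (h₂ : ZMod p)) / ((h₁ : ZMod p) - 1))) :
    (0 : k) ≠ 1 ∧ (0 : k) ≠ c ∧ (1 : k) ≠ c ∧
    IsExactRF ((RatFunc.X ^ (p - 1) * (RatFunc.X - 1) ^ h₁ *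
      (RatFunc.X - RatFunc.C c) ^ h₂)⁻¹) := by
  obtain ⟨hh1l, hh1u⟩ := hh₁
  obtain ⟨hh2l, hh2u⟩ := hh₂
  have hp : p.Prime := Fact.out
  -- basic casts
  have hcast : ∀ n : ℕ, ((n : k) = 0 ↔ p ∣ n) := fun n => CharP.cast_eq_zero_iff k p n
  have hH1 : ((h₁ : k) - 1) ≠ 0 := by
    have h2 : ((h₁ - 1 : ℕ) : k) ≠ 0 := by
      intro h0
      have hd := (hcast _).mp h0
      have := Nat.le_of_dvd (by omega) hd
      omega
    intro h; apply h2
    push_cast [Nat.cast_sub (by omega : 1 ≤ h₁)]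
    exact h
  have hH2 : ((1 : k) - (h₂ : k)) ≠ 0 := by
    have h2 : ((h₂ - 1 : ℕ) : k) ≠ 0 := by
      intro h0
      have hd := (hcast _).mp h0
      have := Nat.le_of_dvd (by omega) hd
      omega
    intro h; apply h2
    push_cast [Nat.cast_sub (by omega : 1 ≤ h₂)]
    linear_combination -h
  have hsum : ((h₁ : k) + (h₂ : k) - 2) ≠ 0 := by
    have h2 : ((h₁ + h₂ - 2 : ℕ) : k) ≠ 0 := by
      intro h0
      rcases (hcast _).mp h0 with ⟨t, ht⟩
      rcases Nat.lt_or_ge t 2 with h2t | h2t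
      · interval_cases t <;> omega
      · have : p * 2 ≤ p * t := Nat.mul_le_mul_left p h2t
        omega
    intro h; apply h2
    push_cast [Nat.cast_sub (by omega : 2 ≤ h₁ + h₂)]
    exact h
  have hck : c = (1 - (h₂ : k)) / ((h₁ : k) - 1) := by
    rw [hc]; push_cast [map_div₀, map_sub, map_one, map_natCast]; ring_nf
  have hrel : c * ((h₁ : k) - 1) = 1 - (h₂ : k) := by
    rw [hck, div_mul_cancel₀ _ hH1]
  have hc0 : c ≠ 0 := by
    rw [hck]; exact div_ne_zero hH2 hH1
  have hc1 : (1 : k) ≠ c := by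
    intro h
    apply hsum
    have h5 := hrel
    rw [← h, one_mul] at h5
    linear_combination h5
  refine ⟨fun h => one_ne_zero (α := k) h.symm, fun h => hc0 h.symm, hc1, ?_⟩
  -- main construction
  obtain ⟨m, hm⟩ : ∃ m, p = m + 3 := ⟨p - 3, by omega⟩
  subst hm
  obtain ⟨r', hra⟩ : ∃ r', (r' + 1) + h₁ = m + 3 := ⟨m + 2 - h₁, by omega⟩
  obtain ⟨s', hsa⟩ : ∃ s', (s' + 1) + h₂ = m + 3 := ⟨m + 2 - h₂, by omega⟩
  set A : Polynomial k := X - C 1 with hAdef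
  set B : Polynomial k := X - C c with hBdef
  set W : Polynomial k := A ^ (r' + 1) * B ^ (s' + 1) with hWdef
  have hm3 : (((m + 3 : ℕ)) : k) = 0 := (hcast _).mpr dvd_rfl
  -- derivative of W
  have hdW : derivative W = C (((r' + 1 : ℕ)) : k) * (A ^ r' * B ^ (s' + 1))
      + C (((s' + 1 : ℕ)) : k) * (A ^ (r' + 1) * B ^ s') := by
    simp only [hWdef, hAdef, hBdef, derivative_mul, derivative_pow, Nat.add_sub_cancel,
      derivative_sub, derivative_X, derivative_C, derivative_one, sub_zero, C_1,
      mul_one, one_mul, mul_zero, zero_mul, add_zero]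
    ring
  -- the ODE satisfied by W
  have hODE : X ^ 2 * derivative W = X * derivative W + C c * (X * derivative W)
      - C c * derivative W
      + C (((r' + 1 : ℕ)) : k) * (X * W) + C (((s' + 1 : ℕ)) : k) * (X * W)
      - C (((r' + 1 : ℕ)) : k) * (C c * W) - C (((s' + 1 : ℕ)) : k) * W := by
    rw [hdW]
    simp only [hWdef, hAdef, hBdef, C_1]
    ring
  -- extract coefficient at m + 2
  have hco := congrArg (fun q : Polynomial k => q.coeff (m + 2)) hODE
  have e1 : (X ^ 2 * derivative W).coeff (m + 2) = (derivative W).coeff m :=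
    coeff_X_pow_mul (derivative W) 2 m
  have e2 : ∀ q : Polynomial k, (X * q).coeff (m + 2) = q.coeff (m + 1) := fun q =>
    coeff_X_mul q (m + 1)
  simp only [coeff_add, coeff_sub, coeff_C_mul, e1, e2, coeff_derivative] at hco
  -- cast relations
  have hRk : (((r' + 1 : ℕ)) : k) + (h₁ : k) = 0 := by
    have : ((((r' + 1) + h₁ : ℕ)) : k) = 0 := by rw [hra]; exact hm3
    push_cast at this ⊢
    linear_combination this
  have hSk : (((s' + 1 : ℕ)) : k) + (h₂ : k) = 0 := by
    have : ((((s' + 1) + h₂ : ℕ)) : k) = 0 := by rw [hsa]; exact hm3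
    push_cast at this ⊢
    linear_combination this
  push_cast at hco hRk hSk hm3
  -- the key vanishing coefficient
  have hz : ((h₁ : k) + (h₂ : k) - 2) * W.coeff (m + 1) = 0 := by
    linear_combination hco + W.coeff (m + 1) * hRk + W.coeff (m + 1) * hSk
      - c * W.coeff (m + 2) * hRk - W.coeff (m + 2) * hSk
      + (-(W.coeff (m + 1)) + (1 + c) * W.coeff (m + 2) - c * W.coeff (m + 3)) * hm3
      + W.coeff (m + 2) * hrel
  have hw : W.coeff (m + 1) = 0 := by
    rcases mul_eq_zero.mp hz with h | h
    · exact absurd h hsum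
    · exact h
  -- the polynomial N and its antiderivative
  set N : Polynomial k := X * W with hNdef
  have hNcoeff : ∀ i : ℕ, ((i : k) + 1) = 0 → N.coeff i = 0 := by
    intro i hi
    have hdvd : (m + 3) ∣ (i + 1) := by
      apply (hcast _).mp
      push_cast
      exact hi
    obtain ⟨t, ht⟩ := hdvd
    have hdegA : (A : Polynomial k).natDegree = 1 := natDegree_X_sub_C 1
    have hdegB : (B : Polynomial k).natDegree = 1 := natDegree_X_sub_C c
    have hdegN : N.natDegree ≤ 1 + ((r' + 1) * 1 + (s' + 1) * 1) := by
      refine le_trans natDegree_mul_le (add_le_add natDegree_X_le ?_)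
      refine le_trans natDegree_mul_le (add_le_add ?_ ?_)
      · exact le_trans natDegree_pow_le (by rw [hdegA])
      · exact le_trans natDegree_pow_le (by rw [hdegB])
    rcases Nat.lt_or_ge t 2 with h2t | h2t
    · interval_cases t
      · omega
      · have hieq : i = m + 2 := by omega
        rw [hieq, hNdef]
        rw [show m + 2 = (m + 1) + 1 from rfl, coeff_X_mul]
        exact hw
    · apply coeff_eq_zero_of_natDegree_lt
      have : (m + 3) * 2 ≤ (m + 3) * t := Nat.mul_le_mul_left _ h2t
      omega
  obtain ⟨F, hF⟩ := exists_antideriv N hNcoeff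
  -- the denominator Q^(m+3)
  set Q : Polynomial k := X * A * B with hQdef
  have hA0 : (A : Polynomial k) ≠ 0 := X_sub_C_ne_zero 1
  have hB0 : (B : Polynomial k) ≠ 0 := X_sub_C_ne_zero c
  have hQ0 : Q ≠ 0 := mul_ne_zero (mul_ne_zero X_ne_zero hA0) hB0
  have hv0 : Q ^ (m + 3) ≠ 0 := pow_ne_zero _ hQ0
  have hdv : derivative (Q ^ (m + 3)) = 0 := by
    have h0 : (((m + 3 : ℕ)) : k) = 0 := by push_cast; linear_combination hm3
    rw [derivative_pow, h0, C_0, zero_mul, zero_mul]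
  have hN0 : N ≠ 0 := mul_ne_zero X_ne_zero (mul_ne_zero (pow_ne_zero _ hA0) (pow_ne_zero _ hB0))
  -- key polynomial identity
  set D : Polynomial k := X ^ (m + 2) * A ^ h₁ * B ^ h₂ with hDdef
  have hNDQ : N * D = Q ^ (m + 3) := by
    have step1 : N * D = X ^ (1 + (m + 2)) * A ^ ((r' + 1) + h₁) * B ^ ((s' + 1) + h₂) := by
      simp only [hNdef, hWdef, hDdef, pow_add, pow_one]
      ring
    rw [step1, hra, hsa, show 1 + (m + 2) = m + 3 from by omega, hQdef, mul_pow, mul_pow]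
  -- pass to RatFunc
  set φ := algebraMap (Polynomial k) (RatFunc k) with hφdef
  have hφv0 : φ (Q ^ (m + 3)) ≠ 0 := RatFunc.algebraMap_ne_zero hv0
  have hφN0 : φ N ≠ 0 := RatFunc.algebraMap_ne_zero hN0
  have hgD : RatFunc.X ^ (m + 3 - 1) * (RatFunc.X - 1) ^ h₁ *
      (RatFunc.X - RatFunc.C c) ^ h₂ = φ D := by
    rw [show m + 3 - 1 = m + 2 from rfl]
    simp only [hDdef, hAdef, hBdef, hφdef, map_mul, map_pow, map_sub,
      RatFunc.algebraMap_X, RatFunc.algebraMap_C, map_one]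
  refine ⟨φ F / φ (Q ^ (m + 3)), F, Q ^ (m + 3), hv0, rfl, ?_⟩
  rw [hgD, hF, hdv, mul_zero, sub_zero]
  have key : φ (N * Q ^ (m + 3)) / φ ((Q ^ (m + 3)) ^ 2) = (φ D)⁻¹ := by
    rw [sq, RingHom.map_mul φ N (Q ^ (m + 3)), RingHom.map_mul φ (Q ^ (m + 3)) (Q ^ (m + 3)),
      mul_div_mul_right _ _ hφv0, ← hNDQ, RingHom.map_mul φ N D, div_mul_cancel_left₀ hφN0]
  exact key.symm
end

section
/- Let p be a prime, let k be a field of characteristic p, and let n be an integer with 1 ≤ n ≤ p − 1. Then the rational function 1/(x^{n+1} · (x^{p−n} − 1)^{n+1}) is exact. -/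
/-!
With `m = p - n`, the antiderivative is `1 / (n² X^p (X^m - 1)^n)`. In characteristic `p` the
factor `X^p` has derivative zero, and since `m ≡ -n`, differentiating `(X^m - 1)^(-n)` produces
`-n m X^(m-1) (X^m - 1)^(-n-1) = n² X^(m-1) (X^m - 1)^(-n-1)`; as `p - (m - 1) = n + 1`, the
derivative is exactly `1 / (X^(n+1) (X^m - 1)^(n+1))`.
-/

open Polynomial

theorem Polynomial.derivative_X_pow_char (R : Type*) [CommSemiring R] (p : ℕ) [CharP R p] :
    derivative (X ^ p : R[X]) = 0 := by
  simp [derivative_X_pow, CharP.cast_eq_zero]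

theorem Polynomial.X_mul_X_pow_sub_one_mul_derivative_pow (R : Type*) [CommRing R] (m n : ℕ) :
    X * (X ^ m - 1) * derivative ((X ^ m - 1 : R[X]) ^ n) =
      C ((n * m : ℕ) : R) * X ^ m * (X ^ m - 1) ^ n := by
  rcases n with _ | n
  · simp
  rcases m with _ | m
  · simp
  rw [derivative_pow_succ, derivative_sub, derivative_X_pow_succ, derivative_one]
  push_cast
  simp only [C_mul, C_add, C_1, map_natCast]
  ring

theorem Polynomial.X_mul_X_pow_sub_one_mul_derivative_X_pow_char_mul (R : Type*) [CommRing R]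
    (p : ℕ) [CharP R p] {n m : ℕ} (hnm : n + m = p) :
    X * (X ^ m - 1) * derivative (X ^ p * (X ^ m - 1) ^ n : R[X]) =
      -C ((n : R) ^ 2) * X ^ m * (X ^ p * (X ^ m - 1) ^ n) := by
  have hmn : (m : R) = -n := by
    rw [eq_neg_iff_add_eq_zero, ← Nat.cast_add, add_comm, hnm, CharP.cast_eq_zero]
  rw [derivative_mul, derivative_X_pow_char, zero_mul, zero_add, mul_left_comm,
    X_mul_X_pow_sub_one_mul_derivative_pow, Nat.cast_mul, hmn]
  simp only [map_neg, map_pow, map_mul, map_natCast]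
  ring

theorem hasDerivRF_inv_X_pow_mul_X_pow_sub_one_pow {k : Type*} [Field k] (p : ℕ) [CharP k p]
    {n m : ℕ} (hnm : n + m = p) (hn : (n : k) ≠ 0) (hm : m ≠ 0) :
    HasDerivRF
      (algebraMap k[X] (RatFunc k) (C (n ^ 2 : k)⁻¹) /
        algebraMap k[X] (RatFunc k) (X ^ p * (X ^ m - 1) ^ n))
      (RatFunc.X ^ (n + 1) * (RatFunc.X ^ m - 1) ^ (n + 1))⁻¹ := by
  have hT : (X ^ m - 1 : k[X]) ≠ 0 := X_pow_sub_C_ne_zero (Nat.pos_of_ne_zero hm) 1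
  refine ⟨_, _, mul_ne_zero (pow_ne_zero _ X_ne_zero) (pow_ne_zero _ hT), rfl, ?_⟩
  have hY : (RatFunc.X : RatFunc k) ≠ 0 := RatFunc.X_ne_zero
  have hT' : (RatFunc.X ^ m - 1 : RatFunc k) ≠ 0 := by
    simpa using RatFunc.algebraMap_ne_zero hT
  have hn' : (n : RatFunc k) ≠ 0 := by
    simpa using (map_ne_zero (RatFunc.C : k →+* RatFunc k)).2 hn
  have hv' := congrArg (algebraMap k[X] (RatFunc k))
    (X_mul_X_pow_sub_one_mul_derivative_X_pow_char_mul k p hnm)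
  simp only [map_mul, map_sub, map_neg, map_pow, map_natCast, RatFunc.algebraMap_X,
    map_one] at hv'
  simp only [derivative_C, zero_mul, zero_sub, map_neg, map_mul, map_pow, RatFunc.algebraMap_C,
    map_inv₀, map_natCast, RatFunc.algebraMap_X, map_sub, map_one]
  rw [← hnm] at hv' ⊢
  field_simp
  linear_combination (RatFunc.X ^ n * (RatFunc.X ^ m - 1) ^ n) * hv'

theorem stmt6_general {k : Type*} [Field k] (p : ℕ) [CharP k p]
    (n : ℕ) (hn : 1 ≤ n) (hnp : n ≤ p - 1) :
    IsExactRF ((RatFunc.X ^ (n + 1) * (RatFunc.X ^ (p - n) - 1) ^ (n + 1))⁻¹ : RatFunc k) := by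
  have hn' : (n : k) ≠ 0 := by
    rw [Ne, CharP.cast_eq_zero_iff k p]
    exact Nat.not_dvd_of_pos_of_lt hn (by omega)
  exact ⟨_, hasDerivRF_inv_X_pow_mul_X_pow_sub_one_pow p (by omega) hn' (by omega)⟩

/-- For `1 ≤ n ≤ p - 1` over a field of characteristic `p`, the rational function
`1/(x^{n+1} (x^{p-n} - 1)^{n+1})` is exact. -/
theorem stmt6 {k : Type*} [Field k] (p : ℕ) (hp : p.Prime) [CharP k p]
    (n : ℕ) (hn : 1 ≤ n) (hnp : n ≤ p - 1) :
    IsExactRF ((RatFunc.X ^ (n + 1) * (RatFunc.X ^ (p - n) - 1) ^ (n + 1))⁻¹ : RatFunc k) :=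
  stmt6_general p n hn hnp
end

section
/- Let k be a field of characteristic 5. Then the rational function 1/(x^3 · (x − 1)^2 · (x^2 + x + 1)^2) is exact, i.e., it is the formal derivative of some rational function in k(x). -/
open Polynomial

/-- Over a field of characteristic 5, `1/(x^3 (x-1)^2 (x^2+x+1)^2)` is exact. -/
theorem stmt7 {k : Type*} [Field k] [CharP k 5] :
    IsExactRF ((RatFunc.X ^ 3 * (RatFunc.X - 1) ^ 2 *
      (RatFunc.X ^ 2 + RatFunc.X + 1) ^ 2)⁻¹ : RatFunc k) := by
  have h5k : (5 : k) = 0 := CharP.cast_eq_zero k 5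
  have h5 : (5 : Polynomial k) = 0 := by
    rw [show (5 : Polynomial k) = C (5 : k) from (map_ofNat C 5).symm, h5k, map_zero]
  set u : Polynomial k := C 3 with hu
  set v : Polynomial k := X ^ 5 - X ^ 2 with hv
  have hvne : v ≠ 0 := by
    intro h
    have := congrArg (fun p => Polynomial.coeff p 5) h
    simp [hv, coeff_X_pow] at this
  have hnum : derivative u * v - u * derivative v = (X : Polynomial k) := by
    simp only [hu, hv, derivative_C, derivative_sub, derivative_X_pow]
    push_cast [map_ofNat]
    linear_combination (X - 3 * X ^ 4 : Polynomial k) * h5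
  refine ⟨algebraMap (Polynomial k) (RatFunc k) u / algebraMap (Polynomial k) (RatFunc k) v,
    u, v, hvne, rfl, ?_⟩
  rw [hnum]
  have hv2 : v ^ 2 = X * (X ^ 3 * (X - 1) ^ 2 * (X ^ 2 + X + 1) ^ 2) := by
    rw [hv]; ring
  rw [hv2, map_mul]
  have hX : algebraMap (Polynomial k) (RatFunc k) X = RatFunc.X := RatFunc.algebraMap_X
  have hXne : (RatFunc.X : RatFunc k) ≠ 0 := RatFunc.X_ne_zero
  have hP : algebraMap (Polynomial k) (RatFunc k) (X ^ 3 * (X - 1) ^ 2 * (X ^ 2 + X + 1) ^ 2)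
      = (RatFunc.X ^ 3 * (RatFunc.X - 1) ^ 2 * (RatFunc.X ^ 2 + RatFunc.X + 1) ^ 2 : RatFunc k) := by
    push_cast [hX]
    simp [map_mul, map_pow, map_sub, map_add, map_one, hX]
  rw [hX, hP]
  have hPne : (RatFunc.X ^ 3 * (RatFunc.X - 1) ^ 2 *
      (RatFunc.X ^ 2 + RatFunc.X + 1) ^ 2 : RatFunc k) ≠ 0 := by
    have h1 : (X - 1 : Polynomial k) ≠ 0 := by
      intro h
      have := congrArg (fun p => Polynomial.coeff p 1) h
      simp [coeff_one, coeff_X] at this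
    have h2 : (X ^ 2 + X + 1 : Polynomial k) ≠ 0 := by
      intro h
      have := congrArg (fun p => Polynomial.coeff p 2) h
      simp [coeff_X_pow, coeff_one, coeff_X] at this
    have : (X ^ 3 * (X - 1) ^ 2 * (X ^ 2 + X + 1) ^ 2 : Polynomial k) ≠ 0 :=
      mul_ne_zero (mul_ne_zero (pow_ne_zero _ X_ne_zero) (pow_ne_zero _ h1)) (pow_ne_zero _ h2)
    rw [← hP]
    exact (map_ne_zero_iff _ (RatFunc.algebraMap_injective k)).mpr this
  field_simp
end

section
/- Let k be a field of characteristic 5. Then the rational function 1/(x^3 · (x − 1)^3 · (x^2 + 4x + 2)^2) is exact, i.e., it is the formal derivative of some rational function in k(x). -/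
open Polynomial

/-!
In characteristic 5 the rational function `(2x + 4) / (x² (x - 1)² (x² + 4x + 2))` is a
primitive: the Wronskian of its denominator and numerator collapses to `x (x - 1)`, and
`x (x - 1) / (x² (x - 1)² (x² + 4x + 2))²` is exactly the reciprocal of
`x³ (x - 1)³ (x² + 4x + 2)²`.
-/

theorem isExactRF_inv_of_wronskian_mul_eq_sq {k : Type*} [Field k] {u v p : k[X]} (hv : v ≠ 0)
    (h : wronskian v u * p = v ^ 2) :
    IsExactRF (algebraMap k[X] (RatFunc k) p)⁻¹ := by
  have hv2 : algebraMap k[X] (RatFunc k) (v ^ 2) ≠ 0 :=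
    RatFunc.algebraMap_ne_zero (pow_ne_zero 2 hv)
  have hp : algebraMap k[X] (RatFunc k) p ≠ 0 :=
    RatFunc.algebraMap_ne_zero (right_ne_zero_of_mul (h ▸ pow_ne_zero 2 hv))
  refine ⟨_, u, v, hv, rfl, ?_⟩
  rw [eq_div_iff hv2, ← h, map_mul, mul_left_comm, inv_mul_cancel₀ hp, mul_one, wronskian]
  congr 1
  ring

theorem wronskian_eq_X_mul_X_sub_one_of_charP_five {R : Type*} [CommRing R] [CharP R 5] :
    wronskian (X ^ 2 * (X - 1) ^ 2 * (X ^ 2 + 4 * X + 2)) (2 * X + 4 : R[X]) = X * (X - 1) := by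
  have h5 : (5 : R[X]) = 0 := by exact_mod_cast CharP.cast_eq_zero R[X] 5
  simp only [wronskian, derivative_add, derivative_mul, derivative_pow, derivative_X,
    derivative_sub, derivative_one, derivative_ofNat, Nat.cast_ofNat, map_ofNat]
  linear_combination (-2 * X ^ 6 - 8 * X ^ 5 - 2 * X ^ 4 + 16 * X ^ 3 - X ^ 2 - 3 * X : R[X]) * h5

/-- Over a field of characteristic 5, `1/(x^3 (x-1)^3 (x^2+4x+2)^2)` is exact. -/
theorem stmt8 {k : Type*} [Field k] [CharP k 5] :
    IsExactRF ((RatFunc.X ^ 3 * (RatFunc.X - 1) ^ 3 *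
      (RatFunc.X ^ 2 + 4 * RatFunc.X + 2) ^ 2)⁻¹ : RatFunc k) := by
  have hv : (X ^ 2 * (X - 1) ^ 2 * (X ^ 2 + 4 * X + 2) : k[X]) ≠ 0 := by
    apply Monic.ne_zero
    monicity!
  have h := isExactRF_inv_of_wronskian_mul_eq_sq (u := 2 * X + 4)
    (p := X ^ 3 * (X - 1) ^ 3 * (X ^ 2 + 4 * X + 2) ^ 2) hv
    (by rw [wronskian_eq_X_mul_X_sub_one_of_charP_five]; ring)
  simpa only [map_mul, map_pow, map_add, map_sub, map_one, map_ofNat, RatFunc.algebraMap_X]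
    using h
end

section
/- Let p be an odd prime and let k be an algebraically closed field of characteristic p. Then the polynomial ∑_{i=0}^{(p−1)/2} binom((p−1)/2, i)^2 · X^{(p−1)/2 − i} ∈ k[X] has a root a ∈ k with a ≠ 0 and a ≠ 1. -/
open Polynomial

open Finset

lemma aux_choose_cast {k : Type*} [Field k] (p : ℕ) (hp : p.Prime) [CharP k p] :
    ∀ i, i ≤ p - 1 → ((Nat.choose (p - 1) i : k)) = (-1) ^ i := by
  intro i
  induction i with
  | zero => simp
  | succ n ih =>
    intro hn
    have hn' : n ≤ p - 1 := Nat.le_of_succ_le hn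
    have key := Nat.choose_succ_right_eq (p - 1) n
    have hcast : (((p - 1).choose (n + 1) * (n + 1) : ℕ) : k)
        = (((p - 1).choose n * (p - 1 - n) : ℕ) : k) := by rw [key]
    have hp1 : ((p - 1 : ℕ) : k) = -1 := by
      have h0 : ((p : ℕ) : k) = 0 := CharP.cast_eq_zero k p
      have h1 : 1 ≤ p := hp.one_lt.le
      have h2 : ((p - 1 + 1 : ℕ) : k) = 0 := by rw [Nat.sub_add_cancel h1, h0]
      push_cast at h2
      linear_combination h2
    have hsub : ((p - 1 - n : ℕ) : k) = -1 - n := by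
      rw [Nat.cast_sub hn', hp1]
    rw [Nat.cast_mul, Nat.cast_mul, hsub, ih hn'] at hcast
    have hne : ((n + 1 : ℕ) : k) ≠ 0 := by
      rw [Ne, CharP.cast_eq_zero_iff k p (n+1)]
      intro hdvd
      have := Nat.le_of_dvd (Nat.succ_pos n) hdvd
      omega
    have : ((p - 1).choose (n + 1) : k) * ((n : k) + 1) = (-1) ^ (n + 1) * ((n : k) + 1) := by
      push_cast at hcast ⊢
      linear_combination hcast
    exact mul_right_cancel₀ (by push_cast at hne ⊢; exact hne) this

lemma aux_sum_choose_sq (m : ℕ) :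
    ∑ i ∈ Finset.range (m + 1), m.choose i * m.choose i = (m + m).choose m := by
  rw [Nat.add_choose_eq, Finset.Nat.sum_antidiagonal_eq_sum_range_succ_mk]
  refine Finset.sum_congr rfl fun i hi => ?_
  rw [Nat.choose_symm (by simpa using Nat.lt_succ_iff.mp (Finset.mem_range.mp hi))]

/-- For an odd prime `p` and `k` algebraically closed of characteristic `p`, the polynomial
`∑ᵢ C((p-1)/2, i)² X^{(p-1)/2 - i}` has a root `a ∈ k` with `a ≠ 0` and `a ≠ 1`. -/
theorem stmt14 {k : Type*} [Field k] [IsAlgClosed k] (p : ℕ) (hp : p.Prime) (hodd : Odd p)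
    [CharP k p] :
    ∃ a : k, a ≠ 0 ∧ a ≠ 1 ∧
      ∑ i ∈ Finset.range ((p - 1) / 2 + 1),
        ((Nat.choose ((p - 1) / 2) i : k)) ^ 2 * a ^ ((p - 1) / 2 - i) = 0 := by
  set m := (p - 1) / 2 with hm
  have hp3 : 3 ≤ p := by
    obtain ⟨t, rfl⟩ := hodd
    have := hp.two_le
    omega
  have hm1 : 1 ≤ m := by rw [hm]; omega
  have h2m : m + m = p - 1 := by rw [hm]; obtain ⟨t, rfl⟩ := hodd; omega
  set Q : Polynomial k := ∑ i ∈ Finset.range (m + 1), C ((m.choose i : k) ^ 2) * X ^ (m - i)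
    with hQ
  have hcoeff : Q.coeff m = 1 := by
    rw [hQ, finset_sum_coeff]
    rw [Finset.sum_eq_single 0]
    · simp
    · intro i hi hi0
      rw [coeff_C_mul, coeff_X_pow, if_neg, mul_zero]
      have : i ≤ m := Nat.lt_succ_iff.mp (Finset.mem_range.mp hi)
      omega
    · simp
  have hdeg : Q.degree ≠ 0 := by
    have hle : (m : WithBot ℕ) ≤ Q.degree := le_degree_of_ne_zero (by rw [hcoeff]; exact one_ne_zero)
    intro h
    rw [h] at hle
    exact absurd (Nat.cast_le.mp (by exact_mod_cast hle) : m ≤ 0) (by omega)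
  obtain ⟨a, ha⟩ := IsAlgClosed.exists_root Q hdeg
  rw [IsRoot, hQ, eval_finset_sum] at ha
  simp only [eval_mul, eval_C, eval_pow, eval_X] at ha
  refine ⟨a, ?_, ?_, ha⟩
  · rintro rfl
    rw [Finset.sum_eq_single m] at ha
    · simp at ha
    · intro i hi him
      have : i ≤ m := Nat.lt_succ_iff.mp (Finset.mem_range.mp hi)
      rw [zero_pow (by omega), mul_zero]
    · simp
  · rintro rfl
    simp only [one_pow, mul_one] at ha
    have hcast : (∑ i ∈ Finset.range (m + 1), (m.choose i : k) ^ 2)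
        = (((m + m).choose m : ℕ) : k) := by
      rw [← aux_sum_choose_sq m]
      push_cast
      refine Finset.sum_congr rfl fun i _ => ?_
      ring
    rw [hcast, h2m, aux_choose_cast p hp m (by omega)] at ha
    exact (pow_ne_zero m (neg_ne_zero.mpr one_ne_zero)) ha
end
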